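/- For every subset I ⊆ {1,…,m} and every j ∈ {1,…,m}: û_I · u_j = Σ (−1)^{θ(A,B)+|B|} c(A,u_j)·û_B + (−1)^{|I_{>j}|}·E, where the sum runs over all ordered partitions I = A ⊔ B such that A contains an element greater than j (in particular A ≠ ∅), and E := û_{I∪{j}} if j ∉ I, while E := û_{I_{<j}} · u_j² · û_{I_{>j}} if j ∈ I. -/

import Mathlib

universe u

section GradedCommutators

variable {R : Type u} [Ring R] {m : ℕ}

/-- The sign `(−1)^z` as an element of the ring `R`, for `z : ℤ`. -/
def sgn (R : Type u) [Ring R] (z : ℤ) : R := (((-1 : Rˣ) ^ z : Rˣ) : R)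

/-- The graded commutator `[a,b] = a·b − (−1)^{pq}·b·a` of elements `a`, `b` of degrees
`p`, `q`. -/
def gbrk (p q : ℤ) (a b : R) : R := a * b - sgn R (p * q) * (b * a)

/-- The iterated commutator `[u_{i₁},[u_{i₂},…,[u_{i_k},x]…]]` along a list `i₁,…,i_k`,
where the `u_i` have degree `1` and `x` has degree `d`. -/
def cList (u : Fin m → R) (d : ℤ) (x : R) : List (Fin m) → R
  | [] => x
  | i :: l => gbrk 1 (d + l.length) (u i) (cList u d x l)

/-- `c(I,x) = [u_{i₁},[u_{i₂},…,[u_{i_k},x]…]]` for `I = {i₁ < … < i_k}`,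
where `x` has degree `d`. -/
def cNest (u : Fin m → R) (d : ℤ) (x : R) (I : Finset (Fin m)) : R :=
  cList u d x (I.sort (· ≤ ·))

/-- `û_I = u_{i₁} ⋯ u_{i_k}` for `I = {i₁ < … < i_k}`. -/
def uHat (u : Fin m → R) (I : Finset (Fin m)) : R :=
  ((I.sort (· ≤ ·)).map u).prod

/-- The Koszul sign exponent `θ(A,B) = #{(a,b) ∈ A × B | a > b}`. -/
def theta (A B : Finset (Fin m)) : ℕ :=
  ((A ×ˢ B).filter fun p => p.2 < p.1).card

/-! ### Auxiliary lemmas -/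

lemma sgn_eval (z : ℤ) : sgn R z = if Even z then 1 else -1 := by
  unfold sgn
  rcases Int.even_or_odd z with ⟨c, hc⟩ | ⟨c, hc⟩
  · rw [if_pos ⟨c, hc⟩, hc]
    have : c + c = 2 * c := by ring
    rw [this, zpow_mul]
    have h2 : ((-1 : Rˣ) ^ (2 : ℤ)) = 1 := by rw [zpow_two]; simp
    rw [h2, one_zpow, Units.val_one]
  · rw [if_neg (by simp [hc, Int.even_add_one, parity_simps]), hc]
    rw [zpow_add, zpow_mul]
    have h2 : ((-1 : Rˣ) ^ (2 : ℤ)) = 1 := by rw [zpow_two]; simp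
    rw [h2, one_zpow, one_mul, zpow_one]
    simp

lemma sgn_add (a b : ℤ) : sgn R (a + b) = sgn R a * sgn R b := by
  unfold sgn
  rw [zpow_add]
  push_cast
  ring

lemma sgn_zero : sgn R 0 = 1 := by simp [sgn]

lemma sgn_comm (z : ℤ) (r : R) : sgn R z * r = r * sgn R z := by
  rw [sgn_eval]
  split <;> simp

lemma sort_union {S T : Finset (Fin m)} (h : ∀ s ∈ S, ∀ t ∈ T, s < t) :
    (S ∪ T).sort (· ≤ ·) = S.sort (· ≤ ·) ++ T.sort (· ≤ ·) := by
  have hdisj : Disjoint S T := by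
    rw [Finset.disjoint_left]
    intro a haS haT
    exact absurd rfl (h a haS a haT).ne
  refine (fun hp h1 h2 => List.Perm.eq_of_pairwise' (r := (· ≤ ·)) h1 h2 hp) ?_ ?_ ?_
  · rw [← Multiset.coe_eq_coe]
    rw [show ((Finset.sort S (· ≤ ·) ++ Finset.sort T (· ≤ ·) : List (Fin m)) : Multiset (Fin m))
        = (Finset.sort S (· ≤ ·) : Multiset (Fin m)) + (Finset.sort T (· ≤ ·) : Multiset (Fin m))
        from rfl]
    rw [Finset.sort_eq, Finset.sort_eq, Finset.sort_eq]
    rw [← Finset.disjUnion_eq_union S T hdisj]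
    rfl
  · exact Finset.pairwise_sort _ _
  · rw [List.pairwise_append]
    refine ⟨Finset.pairwise_sort _ _, Finset.pairwise_sort _ _, ?_⟩
    intro a ha b hb
    exact (h a (by simpa using (Finset.mem_sort (α := Fin m) (· ≤ ·)).1 ha)
      b (by simpa using (Finset.mem_sort (α := Fin m) (· ≤ ·)).1 hb)).le

lemma uHat_empty (u : Fin m → R) : uHat u ∅ = 1 := by simp [uHat]

lemma uHat_union (u : Fin m → R) {S T : Finset (Fin m)} (h : ∀ s ∈ S, ∀ t ∈ T, s < t) :
    uHat u (S ∪ T) = uHat u S * uHat u T := by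
  unfold uHat
  rw [sort_union h, List.map_append, List.prod_append]

lemma uHat_insert_max (u : Fin m → R) {S : Finset (Fin m)} {M : Fin m}
    (h : ∀ s ∈ S, s < M) :
    uHat u (insert M S) = uHat u S * u M := by
  have h1 : insert M S = S ∪ {M} := by
    ext a; simp [or_comm]
  rw [h1, uHat_union u (by simpa using h)]
  simp [uHat]

lemma cList_append (u : Fin m → R) (d : ℤ) (x : R) (M : Fin m) (l : List (Fin m)) :
    cList u d x (l ++ [M]) = cList u (d + 1) (gbrk 1 d (u M) x) l := by
  induction l with
  | nil => simp [cList]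
  | cons i l ih =>
      rw [List.cons_append]
      show gbrk 1 (d + ((l ++ [M]).length : ℕ)) (u i) (cList u d x (l ++ [M])) = _
      rw [ih]
      show _ = gbrk 1 (d + 1 + (l.length : ℕ)) (u i) (cList u (d + 1) (gbrk 1 d (u M) x) l)
      congr 1
      simp only [List.length_append, List.length_singleton]
      push_cast
      ring

lemma cNest_empty (u : Fin m → R) (d : ℤ) (x : R) : cNest u d x ∅ = x := by
  simp [cNest, cList]

lemma cNest_insert_max (u : Fin m → R) (d : ℤ) (x : R) {A : Finset (Fin m)} {M : Fin m}
    (h : ∀ a ∈ A, a < M) :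
    cNest u d x (insert M A) = cNest u (d + 1) (gbrk 1 d (u M) x) A := by
  have h1 : insert M A = A ∪ {M} := by ext a; simp [or_comm]
  unfold cNest
  rw [h1, sort_union (by simpa using h), Finset.sort_singleton, cList_append]

lemma theta_eq_sum (A B : Finset (Fin m)) :
    theta A B = ∑ a ∈ A, (B.filter (· < a)).card := by
  unfold theta
  rw [Finset.card_filter]
  rw [Finset.sum_product]
  congr 1
  ext a
  rw [Finset.card_filter]

lemma theta_empty (B : Finset (Fin m)) : theta (∅ : Finset (Fin m)) B = 0 := by
  simp [theta_eq_sum]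

lemma theta_insert_left {A B : Finset (Fin m)} {M : Fin m} (hM : M ∉ A)
    (h : ∀ b ∈ B, b < M) : theta (insert M A) B = theta A B + B.card := by
  rw [theta_eq_sum, Finset.sum_insert hM, theta_eq_sum, Finset.filter_true_of_mem h,
    add_comm]

lemma theta_insert_right {A B : Finset (Fin m)} {M : Fin m} (hM : M ∉ B)
    (h : ∀ a ∈ A, a < M) : theta A (insert M B) = theta A B := by
  rw [theta_eq_sum, theta_eq_sum]
  apply Finset.sum_congr rfl
  intro a ha
  rw [Finset.filter_insert, if_neg (by exact fun hMa => absurd hMa (h a ha).asymm)]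

lemma theta_union_right {A B C : Finset (Fin m)} (h : ∀ a ∈ A, ∀ c ∈ C, a < c) :
    theta A (B ∪ C) = theta A B := by
  rw [theta_eq_sum, theta_eq_sum]
  apply Finset.sum_congr rfl
  intro a ha
  congr 1
  rw [Finset.filter_union, Finset.filter_false_of_mem (fun c hc => (h a ha c hc).asymm),
    Finset.union_empty]

/-- The master identity: `û_I · x = Σ_{I = A ⊔ B} (−1)^{θ(A,B) + d|B|} c(A,x) û_B`. -/
lemma uHat_mul_master (u : Fin m → R) (I : Finset (Fin m)) :
    ∀ (d : ℤ) (x : R),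
      uHat u I * x
        = ∑ A ∈ I.powerset,
            sgn R ((theta A (I \ A) : ℤ) + d * ((I \ A).card : ℤ))
              * (cNest u d x A * uHat u (I \ A)) := by
  induction I using Finset.strongInduction with
  | _ I ih =>
    intro d x
    rcases I.eq_empty_or_nonempty with rfl | hne
    · simp [uHat_empty, cNest_empty, theta_empty, sgn_zero]
    · set M := I.max' hne with hM
      set I₀ := I.erase M with hI₀
      have hMI : M ∈ I := I.max'_mem hne
      have hMI₀ : M ∉ I₀ := Finset.notMem_erase _ _
      have hI : I = insert M I₀ := (Finset.insert_erase hMI).symm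
      have hlt : ∀ a ∈ I₀, a < M := fun a ha =>
        lt_of_le_of_ne (I.le_max' a (Finset.mem_of_mem_erase ha)) (Finset.ne_of_mem_erase ha)
      have hss : I₀ ⊂ I := Finset.erase_ssubset hMI
      have h1 : uHat u I = uHat u I₀ * u M := by
        rw [hI]; exact uHat_insert_max u hlt
      have key : u M * x = gbrk 1 d (u M) x + sgn R d * (x * u M) := by
        rw [gbrk, one_mul, sub_add_cancel]
      have expand : uHat u I * x
          = sgn R d * (uHat u I₀ * x * u M) + uHat u I₀ * gbrk 1 d (u M) x := by
        rw [h1, mul_assoc, key, mul_add, add_comm]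
        congr 1
        calc uHat u I₀ * (sgn R d * (x * u M))
            = uHat u I₀ * sgn R d * (x * u M) := (mul_assoc _ _ _).symm
          _ = sgn R d * uHat u I₀ * (x * u M) := by rw [← sgn_comm]
          _ = sgn R d * (uHat u I₀ * x * u M) := by rw [mul_assoc, mul_assoc]
      rw [expand, ih I₀ hss d x, Finset.sum_mul, Finset.mul_sum,
        ih I₀ hss (d + 1) (gbrk 1 d (u M) x)]
      rw [hI, Finset.sum_powerset_insert hMI₀]
      congr 1
      -- terms with M ∉ A
      · apply Finset.sum_congr rfl
        intro A hA
        rw [Finset.mem_powerset] at hA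
        have hAM : ∀ a ∈ A, a < M := fun a ha => hlt a (hA ha)
        have hMA' : M ∉ I₀ \ A := fun h => hMI₀ (Finset.mem_sdiff.1 h).1
        have hset : insert M I₀ \ A = insert M (I₀ \ A) := by
          ext a
          simp only [Finset.mem_sdiff, Finset.mem_insert]
          constructor
          · rintro ⟨rfl | haI, haA⟩
            · exact Or.inl rfl
            · exact Or.inr ⟨haI, haA⟩
          · rintro (rfl | ⟨haI, haA⟩)
            · refine ⟨Or.inl rfl, fun hMA => ?_⟩
              exact absurd rfl (hAM M hMA).ne
            · exact ⟨Or.inr haI, haA⟩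
        rw [hset]
        rw [theta_insert_right hMA' hAM, Finset.card_insert_of_notMem hMA',
          uHat_insert_max u (fun b hb => hlt b (Finset.mem_sdiff.1 hb).1)]
        have hsgn : ((theta A (I₀ \ A) : ℤ) + d * ((((I₀ \ A).card : ℕ) + 1 : ℕ) : ℤ))
            = d + ((theta A (I₀ \ A) : ℤ) + d * ((I₀ \ A).card : ℤ)) := by
          push_cast; ring
        rw [hsgn, sgn_add d, mul_assoc (sgn R d)]
        congr 1
        rw [mul_assoc, mul_assoc]
      -- terms with M ∈ A
      · apply Finset.sum_congr rfl
        intro A hA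
        rw [Finset.mem_powerset] at hA
        have hAM : ∀ a ∈ A, a < M := fun a ha => hlt a (hA ha)
        have hMA : M ∉ A := fun h => absurd rfl (hAM M h).ne
        have hset : insert M I₀ \ insert M A = I₀ \ A := by
          ext a
          simp only [Finset.mem_sdiff, Finset.mem_insert, not_or]
          constructor
          · rintro ⟨rfl | haI, hne', haA⟩
            · exact absurd rfl hne'
            · exact ⟨haI, haA⟩
          · rintro ⟨haI, haA⟩
            exact ⟨Or.inr haI, fun h => hMI₀ (h ▸ haI), haA⟩
        rw [hset, theta_insert_left hMA (fun b hb => hlt b (Finset.mem_sdiff.1 hb).1),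
          cNest_insert_max u d x hAM]
        congr 2
        push_cast; ring

end GradedCommutators

/-- For `I ⊆ {1,…,m}` and `j`:
`û_I·u_j = Σ (−1)^{θ(A,B)+|B|} c(A,u_j)·û_B + (−1)^{|I_{>j}|}·E`, the sum over ordered
partitions `I = A ⊔ B` with `A` containing an element greater than `j`, where
`E = û_{I∪{j}}` if `j ∉ I` and `E = û_{I_{<j}}·u_j²·û_{I_{>j}}` if `j ∈ I`. -/
theorem uHat_mul_generator {k R : Type u} [CommRing k] [Ring R] [Algebra k R] {m : ℕ}
    (𝒜 : ℤ → Submodule k R) [GradedAlgebra 𝒜]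
    (u : Fin m → R) (hu : ∀ i, u i ∈ 𝒜 1)
    (I : Finset (Fin m)) (j : Fin m) :
    uHat u I * u j
      = (∑ A ∈ I.powerset.filter (fun A => ∃ a ∈ A, j < a),
          sgn R ((theta A (I \ A) : ℤ) + ((I \ A).card : ℤ))
            * (cNest u 1 (u j) A * uHat u (I \ A)))
        + sgn R ((I.filter (fun a => j < a)).card : ℤ)
            * (if j ∈ I then
                uHat u (I.filter (fun a => a < j)) * (u j * u j)
                  * uHat u (I.filter (fun a => j < a))
              else uHat u (insert j I)) := by
  classical
  set T := I.filter (fun a => j < a) with hT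
  set Ile := I.filter (fun a => ¬ j < a) with hIle
  have master := uHat_mul_master u I 1 (u j)
  simp only [one_mul] at master
  have master2 := uHat_mul_master u Ile 1 (u j)
  simp only [one_mul] at master2
  rw [master, ← Finset.sum_filter_add_sum_filter_not I.powerset (fun A => ∃ a ∈ A, j < a)]
  congr 1
  -- the remaining sum equals sgn(|T|) * E
  have hidx : I.powerset.filter (fun A => ¬ ∃ a ∈ A, j < a) = Ile.powerset := by
    ext A
    simp only [Finset.mem_filter, Finset.mem_powerset, hIle, Finset.subset_iff,
      Finset.mem_filter, not_exists, not_and]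
    constructor
    · rintro ⟨h1, h2⟩ a ha
      exact ⟨h1 ha, fun hj => h2 a ha hj⟩
    · intro h
      exact ⟨fun a ha => (h ha).1, fun a ha hj => (h ha).2 hj⟩
  rw [hidx]
  have step2 : ∑ A ∈ Ile.powerset,
      sgn R ((theta A (I \ A) : ℤ) + ((I \ A).card : ℤ))
        * (cNest u 1 (u j) A * uHat u (I \ A))
      = sgn R (T.card : ℤ) * ((uHat u Ile * u j) * uHat u T) := by
    have : ∀ A ∈ Ile.powerset,
        sgn R ((theta A (I \ A) : ℤ) + ((I \ A).card : ℤ))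
          * (cNest u 1 (u j) A * uHat u (I \ A))
        = sgn R (T.card : ℤ)
            * ((sgn R ((theta A (Ile \ A) : ℤ) + ((Ile \ A).card : ℤ))
              * (cNest u 1 (u j) A * uHat u (Ile \ A))) * uHat u T) := by
      intro A hA
      rw [Finset.mem_powerset] at hA
      have hAle : ∀ a ∈ A, ¬ j < a := fun a ha => (Finset.mem_filter.1 (hA ha)).2
      have hAT : ∀ a ∈ A, ∀ t ∈ T, a < t := fun a ha t ht =>
        lt_of_le_of_lt (not_lt.1 (hAle a ha)) (Finset.mem_filter.1 ht).2
      have hIleT : ∀ s ∈ Ile \ A, ∀ t ∈ T, s < t := fun s hs t ht =>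
        lt_of_le_of_lt (not_lt.1 (Finset.mem_filter.1 (Finset.mem_sdiff.1 hs).1).2)
          (Finset.mem_filter.1 ht).2
      have hdisj : Disjoint (Ile \ A) T := by
        rw [Finset.disjoint_left]
        intro a ha hat
        exact absurd rfl (hIleT a ha a hat).ne
      have hsplit : I \ A = (Ile \ A) ∪ T := by
        ext a
        simp only [Finset.mem_sdiff, Finset.mem_union, hIle, hT, Finset.mem_filter]
        constructor
        · rintro ⟨haI, haA⟩
          by_cases hja : j < a
          · exact Or.inr ⟨haI, hja⟩
          · exact Or.inl ⟨⟨haI, hja⟩, haA⟩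
        · rintro (⟨⟨haI, _⟩, haA⟩ | ⟨haI, hja⟩)
          · exact ⟨haI, haA⟩
          · exact ⟨haI, fun haA => (hAle a haA) hja⟩
      rw [hsplit, theta_union_right hAT, Finset.card_union_of_disjoint hdisj,
        uHat_union u hIleT]
      have hexp : ((theta A (Ile \ A) : ℤ) + (((Ile \ A).card + T.card : ℕ) : ℤ))
          = (T.card : ℤ) + ((theta A (Ile \ A) : ℤ) + ((Ile \ A).card : ℤ)) := by
        push_cast; ring
      rw [hexp, sgn_add]
      simp only [mul_assoc]
    rw [Finset.sum_congr rfl this, ← Finset.mul_sum, ← Finset.sum_mul, ← master2]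
  rw [step2]
  congr 1
  by_cases hjI : j ∈ I
  · rw [if_pos hjI]
    have hIle' : Ile = insert j (I.filter (fun a => a < j)) := by
      ext a
      simp only [hIle, Finset.mem_filter, Finset.mem_insert, not_lt]
      constructor
      · rintro ⟨haI, haj⟩
        rcases lt_or_eq_of_le haj with h | h
        · exact Or.inr ⟨haI, h⟩
        · exact Or.inl h
      · rintro (rfl | ⟨haI, haj⟩)
        · exact ⟨hjI, le_refl _⟩
        · exact ⟨haI, haj.le⟩
    rw [hIle', uHat_insert_max u (fun a ha => (Finset.mem_filter.1 ha).2)]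
    simp only [mul_assoc]
  · rw [if_neg hjI]
    have hIle' : Ile = I.filter (fun a => a < j) := by
      ext a
      simp only [hIle, Finset.mem_filter, not_lt]
      constructor
      · rintro ⟨haI, haj⟩
        exact ⟨haI, lt_of_le_of_ne haj (fun h => hjI (h ▸ haI))⟩
      · rintro ⟨haI, haj⟩
        exact ⟨haI, haj.le⟩
    have h1 : uHat u Ile * u j = uHat u (insert j Ile) := by
      rw [uHat_insert_max u (fun a ha => by
        rw [hIle'] at ha; exact (Finset.mem_filter.1 ha).2)]
    rw [h1, ← uHat_union u (fun s hs t ht => by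
      rcases Finset.mem_insert.1 hs with rfl | hs'
      · exact (Finset.mem_filter.1 ht).2
      · exact lt_trans (by rw [hIle'] at hs'; exact (Finset.mem_filter.1 hs').2)
          (Finset.mem_filter.1 ht).2)]
    congr 1
    ext a
    simp only [Finset.mem_union, Finset.mem_insert, hIle', hT, Finset.mem_filter]
    constructor
    · rintro ((rfl | ⟨haI, _⟩) | ⟨haI, _⟩)
      · exact Or.inl rfl
      · exact Or.inr haI
      · exact Or.inr haI
    · rintro (rfl | haI)
      · exact Or.inl (Or.inl rfl)
      · rcases lt_or_gt_of_ne (fun h : a = j => hjI (h ▸ haI)) with h | h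
        · exact Or.inl (Or.inr ⟨haI, h⟩)
        · exact Or.inr ⟨haI, h⟩
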